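/- arXiv:2312.06885 — 2 statements merged into one kernel-verified Lean document; each statement's English description precedes it below -/
import Mathlib

section
/- Let f : ℝⁿ → ℝⁿ, let A be a real n×n matrix, set F_n(x) := f(x) − A x, let λ > 0 be a real number and w ∈ ℝⁿ. Suppose h : ℝⁿ → ℝ is differentiable and satisfies ⟨∇h(x), f(x)⟩ − λ h(x) + ⟨w, F_n(x)⟩ = 0 for all x, γ : ℝ → ℝⁿ is a differentiable solution curve with γ′(τ) = f(γ(τ)), τ ↦ ⟨w, F_n(γ(τ))⟩ is continuous, and T ≥ 0. Then |h(γ(0)) − ∫₀ᵀ e^{−λ τ} ⟨w, F_n(γ(τ))⟩ dτ| ≤ |h(γ(T))|. -/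
open scoped RealInnerProductSpace

/-!
Along the solution curve, `u τ = h (γ τ)` satisfies `u' = λ u - ⟪w, Fₙ(γ τ)⟫` by the PDE,
so `e^{-λτ} u τ` is an antiderivative of `-e^{-λτ} ⟪w, Fₙ(γ τ)⟫`. Hence the error of the
truncated integral is exactly `e^{-λT} h (γ T)`, and `e^{-λT} ≤ 1`.
-/

theorem HasGradientAt.comp_hasDerivAt {E : Type*} [NormedAddCommGroup E]
    [InnerProductSpace ℝ E] [CompleteSpace E] {h : E → ℝ} {h' : E} {γ : ℝ → E} {v : E}
    {t : ℝ} (hh : HasGradientAt h h' (γ t)) (hγ : HasDerivAt γ v t) :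
    HasDerivAt (h ∘ γ) ⟪h', v⟫ t := by
  simpa using hh.hasFDerivAt.comp_hasDerivAt t hγ

section LinearInhomogeneous

variable {u g : ℝ → ℝ} {lam : ℝ}

theorem integral_exp_mul_eq_of_hasDerivAt (hu : ∀ τ, HasDerivAt u (lam * u τ - g τ) τ)
    (hg : Continuous g) (a b : ℝ) :
    ∫ τ in a..b, Real.exp (-lam * τ) * g τ =
      Real.exp (-lam * a) * u a - Real.exp (-lam * b) * u b := by
  have hderiv : ∀ τ, HasDerivAt (fun τ => Real.exp (-lam * τ) * u τ)
      (-(Real.exp (-lam * τ) * g τ)) τ := by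
    intro τ
    have hexp : HasDerivAt (fun τ => Real.exp (-lam * τ)) (Real.exp (-lam * τ) * -lam) τ := by
      simpa using ((hasDerivAt_id τ).const_mul (-lam)).exp
    exact (hexp.mul (hu τ)).congr_deriv (by ring)
  have hintegrable : IntervalIntegrable (fun τ => -(Real.exp (-lam * τ) * g τ)) MeasureTheory.volume
      a b :=
    (by fun_prop : Continuous fun τ => -(Real.exp (-lam * τ) * g τ)).intervalIntegrable a b
  rw [← neg_sub, ← intervalIntegral.integral_eq_sub_of_hasDerivAt (fun τ _ => hderiv τ) hintegrable,
    intervalIntegral.integral_neg, neg_neg]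

theorem abs_sub_integral_exp_mul_le_of_hasDerivAt
    (hu : ∀ τ, HasDerivAt u (lam * u τ - g τ) τ) (hg : Continuous g) (hlam : 0 ≤ lam)
    {T : ℝ} (hT : 0 ≤ T) :
    |u 0 - ∫ τ in (0 : ℝ)..T, Real.exp (-lam * τ) * g τ| ≤ |u T| := by
  have hexp_le : Real.exp (-lam * T) ≤ 1 := Real.exp_le_one_iff.mpr (by nlinarith)
  calc |u 0 - ∫ τ in (0 : ℝ)..T, Real.exp (-lam * τ) * g τ|
      = Real.exp (-lam * T) * |u T| := by
        rw [integral_exp_mul_eq_of_hasDerivAt hu hg, mul_zero, Real.exp_zero, one_mul,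
          sub_sub_cancel, abs_mul, abs_of_pos (Real.exp_pos _)]
    _ ≤ |u T| := mul_le_of_le_one_left (abs_nonneg _) hexp_le

end LinearInhomogeneous

theorem stmt2_general {n : ℕ}
    (f : EuclideanSpace ℝ (Fin n) → EuclideanSpace ℝ (Fin n))
    (Fn : EuclideanSpace ℝ (Fin n) → EuclideanSpace ℝ (Fin n))
    (lam : ℝ) (hlam : 0 < lam) (w : EuclideanSpace ℝ (Fin n))
    (h : EuclideanSpace ℝ (Fin n) → ℝ)
    (hdiff : Differentiable ℝ h)
    (hpde : ∀ x, ⟪gradient h x, f x⟫ - lam * h x + ⟪w, Fn x⟫ = 0)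
    (γ : ℝ → EuclideanSpace ℝ (Fin n))
    (hγ : ∀ τ, HasDerivAt γ (f (γ τ)) τ)
    (hcont : Continuous fun τ => (⟪w, Fn (γ τ)⟫ : ℝ))
    (T : ℝ) (hT : 0 ≤ T) :
    |h (γ 0) - ∫ τ in (0 : ℝ)..T, Real.exp (-lam * τ) * ⟪w, Fn (γ τ)⟫|
      ≤ |h (γ T)| := by
  have hflow : ∀ τ, HasDerivAt (h ∘ γ) (lam * h (γ τ) - ⟪w, Fn (γ τ)⟫) τ := fun τ => by
    convert (hdiff (γ τ)).hasGradientAt.comp_hasDerivAt (hγ τ) using 1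
    linarith [hpde (γ τ)]
  exact abs_sub_integral_exp_mul_le_of_hasDerivAt hflow hcont hlam.le hT

/-- For `λ > 0`, the truncated path-integral approximation of `h` at the
initial condition satisfies `|h(γ(0)) − ∫₀ᵀ e^{−λτ}⟨w, Fₙ(γ(τ))⟩ dτ| ≤ |h(γ(T))|`. -/
theorem stmt2 {n : ℕ}
    (f : EuclideanSpace ℝ (Fin n) → EuclideanSpace ℝ (Fin n))
    (A : Matrix (Fin n) (Fin n) ℝ)
    (Fn : EuclideanSpace ℝ (Fin n) → EuclideanSpace ℝ (Fin n))
    (hFn : ∀ x, Fn x = f x - Matrix.toEuclideanLin A x)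
    (lam : ℝ) (hlam : 0 < lam) (w : EuclideanSpace ℝ (Fin n))
    (h : EuclideanSpace ℝ (Fin n) → ℝ)
    (hdiff : Differentiable ℝ h)
    (hpde : ∀ x, ⟪gradient h x, f x⟫ - lam * h x + ⟪w, Fn x⟫ = 0)
    (γ : ℝ → EuclideanSpace ℝ (Fin n))
    (hγ : ∀ τ, HasDerivAt γ (f (γ τ)) τ)
    (hcont : Continuous fun τ => (⟪w, Fn (γ τ)⟫ : ℝ))
    (T : ℝ) (hT : 0 ≤ T) :
    |h (γ 0) - ∫ τ in (0 : ℝ)..T, Real.exp (-lam * τ) * ⟪w, Fn (γ τ)⟫|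
      ≤ |h (γ T)| :=
  stmt2_general f Fn lam hlam w h hdiff hpde γ hγ hcont T hT
end

section
/- Let f : ℝⁿ → ℝⁿ, let λ > 0 be a real number, and let φ : ℝⁿ → ℝ be continuous, differentiable, and satisfy ⟨∇φ(x), f(x)⟩ = λ φ(x) for all x. Let γ : ℝ → ℝⁿ be a differentiable solution curve with γ′(t) = f(γ(t)) for all t and γ(0) = x. If γ(t) converges to some point x* ∈ ℝⁿ as t → ∞ (in particular if x lies in the stable manifold of an equilibrium), then φ(x) = 0. -/
open scoped RealInnerProductSpace Topology
open Filter

/-!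
Along a solution curve `γ`, the function `g = φ ∘ γ` satisfies `g' = λ g`, so
`g t = e^{λ t} g 0`. Since `γ t → x*`, `g t` converges as `t → ∞`, which for `λ > 0`
forces `g 0 = φ x = 0`.
-/

theorem hasDerivAt_comp_inner_gradient {E : Type*} [NormedAddCommGroup E]
    [InnerProductSpace ℝ E] [CompleteSpace E] {φ : E → ℝ} {γ : ℝ → E} {v : E} {t : ℝ}
    (hφ : DifferentiableAt ℝ φ (γ t)) (hγ : HasDerivAt γ v t) :
    HasDerivAt (φ ∘ γ) ⟪gradient φ (γ t), v⟫ t := by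
  rw [inner_gradient_left]
  exact hφ.hasFDerivAt.comp_hasDerivAt t hγ

section LinearODE

variable {g : ℝ → ℝ} {lam : ℝ}

theorem exp_neg_mul_mul_eq_of_hasDerivAt (hg : ∀ t, HasDerivAt g (lam * g t) t) (t : ℝ) :
    Real.exp (-(lam * t)) * g t = g 0 := by
  have hderiv : ∀ s, HasDerivAt (fun s => Real.exp (-(lam * s)) * g s) 0 s := fun s => by
    have hexp : HasDerivAt (fun s => Real.exp (-(lam * s))) (Real.exp (-(lam * s)) * -lam) s :=
      by simpa using ((hasDerivAt_id s).const_mul lam).neg.exp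
    exact (hexp.mul (hg s)).congr_deriv (by ring)
  simpa using is_const_of_deriv_eq_zero (fun s => (hderiv s).differentiableAt)
    (fun s => (hderiv s).deriv) t 0

theorem eq_zero_of_hasDerivAt_of_tendsto (hlam : 0 < lam)
    (hg : ∀ t, HasDerivAt g (lam * g t) t) {L : ℝ} (hL : Tendsto g atTop (𝓝 L)) :
    g 0 = 0 := by
  have hdecay : Tendsto (fun t => Real.exp (-(lam * t))) atTop (𝓝 0) :=
    Real.tendsto_exp_atBot.comp <| tendsto_neg_atTop_atBot.comp <|
      tendsto_id.const_mul_atTop hlam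
  have hlim : Tendsto (fun t => Real.exp (-(lam * t)) * g t) atTop (𝓝 (0 * L)) :=
    hdecay.mul hL
  simp only [exp_neg_mul_mul_eq_of_hasDerivAt hg, zero_mul] at hlim
  exact tendsto_nhds_unique tendsto_const_nhds hlim

end LinearODE

theorem stmt9_general {n : ℕ}
    (f : EuclideanSpace ℝ (Fin n) → EuclideanSpace ℝ (Fin n))
    (lam : ℝ) (hlam : 0 < lam)
    (φ : EuclideanSpace ℝ (Fin n) → ℝ)
    (hdiff : Differentiable ℝ φ)
    (heig : ∀ x, ⟪gradient φ x, f x⟫ = lam * φ x)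
    (γ : ℝ → EuclideanSpace ℝ (Fin n))
    (hγ : ∀ t, HasDerivAt γ (f (γ t)) t)
    (x : EuclideanSpace ℝ (Fin n)) (hγ0 : γ 0 = x)
    (xstar : EuclideanSpace ℝ (Fin n))
    (hconv : Tendsto γ atTop (𝓝 xstar)) :
    φ x = 0 := by
  have hODE : ∀ t, HasDerivAt (φ ∘ γ) (lam * (φ ∘ γ) t) t := fun t =>
    (hasDerivAt_comp_inner_gradient (hdiff (γ t)) (hγ t)).congr_deriv (heig (γ t))
  have hlim : Tendsto (φ ∘ γ) atTop (𝓝 (φ xstar)) :=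
    (hdiff.continuous.tendsto xstar).comp hconv
  simpa [hγ0] using eq_zero_of_hasDerivAt_of_tendsto hlam hODE hlim

/-- For a Koopman generator eigenfunction `φ` with positive eigenvalue `λ > 0`,
any initial condition whose forward trajectory converges (e.g. a point of the stable manifold
of an equilibrium) lies in the zero level set of `φ`. -/
theorem stmt9 {n : ℕ}
    (f : EuclideanSpace ℝ (Fin n) → EuclideanSpace ℝ (Fin n))
    (lam : ℝ) (hlam : 0 < lam)
    (φ : EuclideanSpace ℝ (Fin n) → ℝ)
    (hcont : Continuous φ)
    (hdiff : Differentiable ℝ φ)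
    (heig : ∀ x, ⟪gradient φ x, f x⟫ = lam * φ x)
    (γ : ℝ → EuclideanSpace ℝ (Fin n))
    (hγ : ∀ t, HasDerivAt γ (f (γ t)) t)
    (x : EuclideanSpace ℝ (Fin n)) (hγ0 : γ 0 = x)
    (xstar : EuclideanSpace ℝ (Fin n))
    (hconv : Tendsto γ atTop (𝓝 xstar)) :
    φ x = 0 :=
  stmt9_general f lam hlam φ hdiff heig γ hγ x hγ0 xstar hconv
end
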